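/- Let $\sigma\ge1$, let $C_\xi\ge1$, and let $(\rho_j)_{j\ge1}$ be nonnegative reals. Suppose the family $(\tau_{m,\lambda})$, indexed by finitely supported multi-indices $m$ and integers $\lambda$, consists of nonnegative reals satisfying $\tau_{m,0}=\delta_{m,0}$, $\tau_{m,\lambda}=0$ if $|m|<\lambda$ or $\lambda<0$, and $\tau_{m+e_j,\lambda}\le \sum_{w\le m}\binom{m}{w}C_\xi^{|w|+1}((|w|+1)!)^{\sigma}\rho^{w}\rho_j\,\tau_{m-w,\lambda-1}$ for all $m$, all $j$, and all $\lambda\ge1$. Then for all finitely supported $m\neq 0$ and $1\le\lambda\le|m|$: $\tau_{m,\lambda}\le C_\xi^{|m|}\Big(\frac{|m|!\,(|m|-1)!}{\lambda!\,(|m|-\lambda)!\,(\lambda-1)!}\Big)^{\sigma}\rho^{m}$. -/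

import Mathlib

/-!
The fraction in the bound is the unsigned Lah number `L(n, λ) = C(n, λ) (n-1)! / (λ-1)!`, and Lah
numbers satisfy `L(n+1, λ+1) = ∑ₖ C(n, k) (k+1)! L(n-k, λ)`. This is the recursion for `τ` once the
multi-index sum over `w ≤ m` is collapsed to a sum over `k = |w|` (multivariate Vandermonde:
`∑_{|w| = k} C(m, w) = C(|m|, k)`). Inducting on `λ`, the powers `σ ≥ 1` are pulled out of the sum
by `c ≤ c^σ` for natural `c` and superadditivity of `x ↦ x^σ` on `[0, ∞)`.
-/

open Finset

/-- `|m|`: the order (modulus) of a finitely supported multi-index. -/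
def msize (m : ℕ →₀ ℕ) : ℕ := m.sum fun _ n => n

/-- Multi-index binomial coefficient `∏_j C(m_j, w_j)`. -/
def mchoose (m w : ℕ →₀ ℕ) : ℕ := ∏ j ∈ m.support, (m j).choose (w j)

/-- `ρ^w = ∏_j ρ_j^{w_j}`. -/
noncomputable def mpow (ρ : ℕ → ℝ) (w : ℕ →₀ ℕ) : ℝ := ∏ j ∈ w.support, ρ j ^ w j

lemma msize_eq_degree (m : ℕ →₀ ℕ) : msize m = m.degree := rfl

lemma msize_add (v w : ℕ →₀ ℕ) : msize (v + w) = msize v + msize w := map_add Finsupp.degree v w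

lemma msize_single (j n : ℕ) : msize (Finsupp.single j n) = n := Finsupp.degree_single j n

lemma msize_mono {v w : ℕ →₀ ℕ} (h : v ≤ w) : msize v ≤ msize w := Finsupp.degree_mono h

lemma msize_tsub {m w : ℕ →₀ ℕ} (h : w ≤ m) : msize (m - w) = msize m - msize w := by
  rw [msize_eq_degree, msize_eq_degree, msize_eq_degree,
    eq_tsub_iff_add_eq_of_le (Finsupp.degree_mono h), ← map_add, tsub_add_cancel_of_le h]

lemma mpow_add (ρ : ℕ → ℝ) (v w : ℕ →₀ ℕ) : mpow ρ (v + w) = mpow ρ v * mpow ρ w :=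
  Finsupp.prod_add_index' (fun _ => pow_zero _) fun _ => pow_add _

lemma mpow_single (ρ : ℕ → ℝ) (j n : ℕ) : mpow ρ (Finsupp.single j n) = ρ j ^ n :=
  Finsupp.prod_single_index (pow_zero _)

lemma mpow_nonneg {ρ : ℕ → ℝ} (hρ : ∀ j, 0 ≤ ρ j) (w : ℕ →₀ ℕ) : 0 ≤ mpow ρ w :=
  prod_nonneg fun j _ => pow_nonneg (hρ j) _

lemma mchoose_single_add {a b i : ℕ} {g v : ℕ →₀ ℕ} (ha : a ∉ g.support) (hb : b ≠ 0)
    (hv : v a = 0) :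
    mchoose (Finsupp.single a b + g) (Finsupp.single a i + v) = b.choose i * mchoose g v := by
  have hga : g a = 0 := Finsupp.notMem_support_iff.mp ha
  have hsupp : (Finsupp.single a b + g).support = insert a g.support := by
    rw [Finsupp.support_add_eq, Finsupp.support_single a hb, insert_eq]
    simpa [Finsupp.support_single a hb] using ha
  rw [mchoose, hsupp, prod_insert ha]
  congr 1
  · simp [hga, hv]
  · refine prod_congr rfl fun j hj => ?_
    have hja : a ≠ j := fun h => ha (h ▸ hj)
    simp [hja]

lemma le_single_add_iff {a b : ℕ} {g w : ℕ →₀ ℕ} (ha : g a = 0) :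
    w ≤ Finsupp.single a b + g ↔ w a ≤ b ∧ w.erase a ≤ g := by
  simp only [Finsupp.le_def]
  refine ⟨fun h => ⟨by simpa [ha] using h a, fun j => ?_⟩, fun h j => ?_⟩
  · rcases eq_or_ne j a with rfl | hj
    · simp
    · simpa [Finsupp.erase_ne hj, hj.symm] using h j
  · rcases eq_or_ne j a with rfl | hj
    · simpa [ha] using h.1
    · have hj' := h.2 j
      simp [Finsupp.erase_ne hj, hj.symm] at hj' ⊢
      exact hj'

lemma sum_Iic_single_add {M : Type*} [AddCommMonoid M] {a b : ℕ} {g : ℕ →₀ ℕ} (ha : g a = 0)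
    (F : (ℕ →₀ ℕ) → M) :
    ∑ w ∈ Iic (Finsupp.single a b + g), F w
      = ∑ i ∈ range (b + 1), ∑ v ∈ Iic g, F (Finsupp.single a i + v) := by
  have hva : ∀ v ≤ g, v a = 0 := fun v hv => Nat.eq_zero_of_le_zero (ha ▸ hv a)
  have herase : ∀ i, ∀ v ≤ g, (Finsupp.single a i + v).erase a = v := fun i v hv => by
    rw [Finsupp.erase_add, Finsupp.erase_single, zero_add,
      Finsupp.erase_of_notMem_support (Finsupp.notMem_support_iff.mpr (hva v hv))]
  rw [← sum_product']
  refine sum_nbij' (fun w => (w a, w.erase a)) (fun p => Finsupp.single a p.1 + p.2)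
    ?_ ?_ ?_ ?_ ?_
  · intro w hw
    simpa [Nat.lt_succ_iff] using (le_single_add_iff ha).mp (mem_Iic.mp hw)
  · rintro ⟨i, v⟩ hp
    simp only [mem_product, mem_range, Nat.lt_succ_iff, mem_Iic] at hp ⊢
    rw [le_single_add_iff ha, herase i v hp.2]
    simpa [hva v hp.2] using hp
  · intro w _
    exact Finsupp.single_add_erase a w
  · rintro ⟨i, v⟩ hp
    simp only [mem_product, mem_Iic] at hp
    simp [hva v hp.2, herase i v hp.2]
  · intro w _
    rw [Finsupp.single_add_erase]

section Vandermonde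

open Polynomial

theorem sum_Iic_mchoose_mul_X_pow (m : ℕ →₀ ℕ) :
    ∑ w ∈ Iic m, C (mchoose m w) * X ^ msize w = (X + 1 : ℕ[X]) ^ msize m := by
  induction m using Finsupp.induction with
  | zero =>
    rw [show Iic (0 : ℕ →₀ ℕ) = {0} by ext; simp]
    simp [mchoose, msize]
  | single_add a b g ha hb ih =>
    have hga : g a = 0 := Finsupp.notMem_support_iff.mp ha
    rw [sum_Iic_single_add hga, msize_add, msize_single, pow_add, ← ih, add_pow, sum_mul_sum]
    refine sum_congr rfl fun i _ => sum_congr rfl fun v hv => ?_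
    have hva : v a = 0 := Nat.eq_zero_of_le_zero (hga ▸ mem_Iic.mp hv a)
    rw [mchoose_single_add ha hb hva, msize_add, msize_single, ← C_eq_natCast]
    simp only [one_pow, mul_one, map_mul, pow_add, Nat.cast_id]
    ring

theorem sum_Iic_mchoose_smul {M : Type*} [AddCommMonoid M] (m : ℕ →₀ ℕ) (f : ℕ → ℕ → M) :
    ∑ w ∈ Iic m, mchoose m w • f (msize w) (msize (m - w))
      = ∑ p ∈ antidiagonal (msize m), (msize m).choose p.1 • f p.1 p.2 := by
  have hcount : ∀ k, ∑ w ∈ Iic m with msize w = k, mchoose m w = (msize m).choose k := by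
    intro k
    have h := congrArg (coeff · k) (sum_Iic_mchoose_mul_X_pow m)
    simpa [finsetSum_coeff, coeff_C_mul_X_pow, coeff_X_add_one_pow, sum_ite, eq_comm] using h
  rw [Nat.sum_antidiagonal_eq_sum_range_succ (fun i j => (msize m).choose i • f i j),
    ← sum_fiberwise_of_maps_to (g := msize) (t := range (msize m + 1))
      fun w hw => mem_range.mpr (Nat.lt_succ_of_le (msize_mono (mem_Iic.mp hw)))]
  refine sum_congr rfl fun k _ => ?_
  rw [← hcount k, sum_smul]
  refine sum_congr rfl fun w hw => ?_
  obtain ⟨hwm, rfl⟩ := mem_filter.mp hw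
  rw [msize_tsub (mem_Iic.mp hwm)]

end Vandermonde

theorem Nat.sum_antidiagonal_choose_mul_choose (a b n : ℕ) :
    ∑ p ∈ antidiagonal n, p.1.choose a * p.2.choose b = (n + 1).choose (a + b + 1) := by
  induction n generalizing b with
  | zero => rcases a with _ | _ <;> rcases b with _ | _ <;> simp [Nat.choose_succ_succ, ← add_assoc]
  | succ n ih =>
    rw [Nat.sum_antidiagonal_succ']
    rcases b with _ | b
    · have h := ih 0
      simp only [Nat.choose_zero_right, mul_one, add_zero] at h ⊢
      rw [h, Nat.choose_succ_succ' (n + 1)]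
    · simp only [Nat.choose_succ_succ' _ b, Nat.choose_zero_succ, mul_zero, zero_add, mul_add,
        sum_add_distrib, ih]
      rw [Nat.choose_succ_succ' (n + 1), add_assoc]

/-- Unsigned Lah numbers `L(n, k) = C(n, k) (n-1)! / (k-1)!`, in a form giving `L(0, 0) = 1` and
`L(n+1, 0) = 0` without a case split. -/
def lah (n k : ℕ) : ℕ := n.choose k * (n - 1).descFactorial (n - k)

@[simp] lemma lah_zero_zero : lah 0 0 = 1 := rfl

@[simp] lemma lah_succ_zero (n : ℕ) : lah (n + 1) 0 = 0 := by simp [lah]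

@[simp] lemma lah_zero_succ (k : ℕ) : lah 0 (k + 1) = 0 := by simp [lah]

lemma lah_succ_succ (n k : ℕ) :
    lah (n + 1) (k + 1) = (n + 1).choose (k + 1) * (n - k).factorial * n.choose k := by
  rw [lah, Nat.add_sub_cancel, Nat.add_sub_add_right, Nat.descFactorial_eq_factorial_mul_choose]
  rcases le_or_gt k n with hk | hk
  · rw [Nat.choose_symm hk, mul_assoc]
  · simp [Nat.choose_eq_zero_of_lt (Nat.succ_lt_succ hk)]

lemma lah_succ_succ_mul_factorial (n k : ℕ) :
    lah (n + 1) (k + 1) * (k + 1).factorial = (n + 1).factorial * n.choose k := by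
  rcases le_or_gt k n with hk | hk
  · have h := Nat.choose_mul_factorial_mul_factorial (Nat.succ_le_succ hk)
    rw [Nat.succ_sub_succ] at h
    rw [lah_succ_succ, ← h]
    ring
  · simp [lah_succ_succ, Nat.choose_eq_zero_of_lt hk]

lemma lah_succ_succ_mul_factorial' (n k : ℕ) :
    lah (n + 1) (k + 1) * k.factorial = n.factorial * (n + 1).choose (k + 1) := by
  refine Nat.eq_of_mul_eq_mul_left k.succ_pos ?_
  calc (k + 1) * (lah (n + 1) (k + 1) * k.factorial)
      = lah (n + 1) (k + 1) * (k + 1).factorial := by rw [Nat.factorial_succ]; ring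
    _ = n.factorial * ((n + 1) * n.choose k) := by
      rw [lah_succ_succ_mul_factorial, Nat.factorial_succ]; ring
    _ = (k + 1) * (n.factorial * (n + 1).choose (k + 1)) := by
      rw [Nat.add_one_mul_choose_eq]; ring

theorem lah_succ_succ_eq_sum (n k : ℕ) :
    lah (n + 1) (k + 1) = ∑ p ∈ antidiagonal n, n.choose p.1 * (p.1 + 1).factorial * lah p.2 k := by
  rcases n with _ | n
  · rcases k with _ | k <;> simp [lah_succ_succ]
  rw [Nat.sum_antidiagonal_succ', Nat.choose_self]
  rcases k with _ | k
  · simp [lah_succ_succ, Nat.factorial_succ]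
  refine Nat.eq_of_mul_eq_mul_right (Nat.factorial_pos (k + 1)) ?_
  have hterm : ∀ p ∈ antidiagonal n,
      (n + 1).choose p.1 * (p.1 + 1).factorial * lah (p.2 + 1) (k + 1) * (k + 1).factorial
        = (n + 1).factorial * ((p.1 + 1).choose 1 * p.2.choose k) := by
    rintro ⟨i, j⟩ hij
    rw [HasAntidiagonal.mem_antidiagonal] at hij
    subst hij
    have h := Nat.add_choose_mul_factorial_mul_factorial i (j + 1)
    rw [← Nat.choose_symm_add, ← add_assoc] at h
    rw [mul_assoc, lah_succ_succ_mul_factorial, ← h, Nat.factorial_succ i, Nat.choose_one_right]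
    ring
  have hconv := Nat.sum_antidiagonal_choose_mul_choose 1 k (n + 1)
  rw [Nat.sum_antidiagonal_succ, add_comm 1 k] at hconv
  rw [lah_zero_succ, mul_zero, zero_add, sum_mul, sum_congr rfl hterm, ← mul_sum,
    lah_succ_succ_mul_factorial', ← hconv]
  simp

lemma cast_lah {n k : ℕ} (hk : 1 ≤ k) (hkn : k ≤ n) :
    (lah n k : ℝ) = n.factorial * (n - 1).factorial
      / (k.factorial * (n - k).factorial * (k - 1).factorial) := by
  obtain ⟨n, rfl⟩ := Nat.exists_eq_add_of_le' (hk.trans hkn)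
  obtain ⟨k, rfl⟩ := Nat.exists_eq_add_of_le' hk
  have hkn' : k ≤ n := by omega
  rw [lah_succ_succ, Nat.add_sub_cancel, Nat.add_sub_cancel, Nat.add_sub_add_right]
  push_cast
  rw [Nat.cast_choose ℝ hkn', Nat.cast_choose ℝ (Nat.succ_le_succ hkn'), Nat.succ_sub_succ]
  field_simp

lemma sum_rpow_le_rpow_sum {ι : Type*} {p : ℝ} (hp : 1 ≤ p) (s : Finset ι) {f : ι → ℝ}
    (hf : ∀ i ∈ s, 0 ≤ f i) : ∑ i ∈ s, f i ^ p ≤ (∑ i ∈ s, f i) ^ p := by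
  induction s using Finset.cons_induction with
  | empty => simp [Real.zero_rpow (by linarith : p ≠ 0)]
  | cons a s ha ih =>
    rw [sum_cons, sum_cons]
    have hs : ∀ i ∈ s, 0 ≤ f i := fun i hi => hf i (mem_cons_of_mem hi)
    calc f a ^ p + ∑ i ∈ s, f i ^ p ≤ f a ^ p + (∑ i ∈ s, f i) ^ p := by gcongr; exact ih hs
      _ ≤ (f a + ∑ i ∈ s, f i) ^ p :=
        Real.add_rpow_le_rpow_add (hf a (mem_cons_self a s)) (sum_nonneg hs) hp

lemma natCast_le_rpow {p : ℝ} (hp : 1 ≤ p) (n : ℕ) : (n : ℝ) ≤ (n : ℝ) ^ p := by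
  rcases Nat.eq_zero_or_pos n with rfl | hn
  · simp [Real.zero_rpow (by linarith : p ≠ 0)]
  · exact Real.self_le_rpow_of_one_le (Nat.one_le_cast.mpr hn) hp

theorem le_lah_bound_of_rec {σ Cξ : ℝ} {ρ : ℕ → ℝ} {T : (ℕ →₀ ℕ) → ℕ → ℝ} {l : ℕ}
    (hσ : 1 ≤ σ) (hCξ : 0 ≤ Cξ) (hρ : ∀ j, 0 ≤ ρ j)
    (ih : ∀ m, T m l ≤ Cξ ^ msize m * (lah (msize m) l : ℝ) ^ σ * mpow ρ m)
    (m : ℕ →₀ ℕ) (j : ℕ)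
    (hrec : T (m + Finsupp.single j 1) (l + 1) ≤
      ∑ w ∈ Iic m, (mchoose m w : ℝ) * Cξ ^ (msize w + 1)
        * (((msize w + 1).factorial : ℝ)) ^ σ * mpow ρ w * ρ j * T (m - w) l) :
    T (m + Finsupp.single j 1) (l + 1) ≤ Cξ ^ msize (m + Finsupp.single j 1)
      * (lah (msize (m + Finsupp.single j 1)) (l + 1) : ℝ) ^ σ
      * mpow ρ (m + Finsupp.single j 1) := by
  let x : (ℕ →₀ ℕ) → ℕ := fun w => (msize w + 1).factorial * lah (msize (m - w)) l
  have hterm : ∀ w ∈ Iic m, (mchoose m w : ℝ) * Cξ ^ (msize w + 1)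
        * (((msize w + 1).factorial : ℝ)) ^ σ * mpow ρ w * ρ j * T (m - w) l
      ≤ Cξ ^ (msize m + 1) * (mpow ρ m * ρ j) * ((mchoose m w : ℝ) * (x w : ℝ) ^ σ) := by
    intro w hw
    replace hw := mem_Iic.mp hw
    have hC : Cξ ^ (msize w + 1) * Cξ ^ msize (m - w) = Cξ ^ (msize m + 1) := by
      rw [← pow_add, msize_tsub hw]
      have := msize_mono hw
      congr 1
      omega
    have hρm : mpow ρ w * mpow ρ (m - w) = mpow ρ m := by
      rw [← mpow_add, add_tsub_cancel_of_le hw]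
    calc _ ≤ (mchoose m w : ℝ) * Cξ ^ (msize w + 1) * (((msize w + 1).factorial : ℝ)) ^ σ
          * mpow ρ w * ρ j
          * (Cξ ^ msize (m - w) * (lah (msize (m - w)) l : ℝ) ^ σ * mpow ρ (m - w)) := by
          gcongr
          · have := hρ j
            have := mpow_nonneg hρ w
            positivity
          · exact ih _
      _ = _ := by
        simp only [x]
        rw [Nat.cast_mul, Real.mul_rpow (by positivity) (by positivity), ← hC, ← hρm]
        ring
  have hpow : ∑ w ∈ Iic m, (mchoose m w : ℝ) * (x w : ℝ) ^ σ
      ≤ (lah (msize m + 1) (l + 1) : ℝ) ^ σ := by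
    have hsum := sum_Iic_mchoose_smul m fun i j => (i + 1).factorial * lah j l
    simp only [smul_eq_mul, ← mul_assoc] at hsum
    calc _ ≤ ∑ w ∈ Iic m, ((mchoose m w : ℝ) * x w) ^ σ := by
          gcongr with w
          rw [Real.mul_rpow (by positivity) (by positivity)]
          gcongr
          exact natCast_le_rpow hσ _
      _ ≤ (∑ w ∈ Iic m, (mchoose m w : ℝ) * x w) ^ σ :=
          sum_rpow_le_rpow_sum hσ _ fun w _ => by positivity
      _ = (lah (msize m + 1) (l + 1) : ℝ) ^ σ := by
          rw [lah_succ_succ_eq_sum, ← hsum]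
          push_cast [x, mul_assoc]
          rfl
  calc _ ≤ _ := hrec
    _ ≤ ∑ w ∈ Iic m, Cξ ^ (msize m + 1) * (mpow ρ m * ρ j) * ((mchoose m w : ℝ) * (x w : ℝ) ^ σ) :=
        sum_le_sum hterm
    _ ≤ Cξ ^ (msize m + 1) * (mpow ρ m * ρ j) * (lah (msize m + 1) (l + 1) : ℝ) ^ σ := by
        rw [← mul_sum]
        exact mul_le_mul_of_nonneg_left hpow
          (mul_nonneg (pow_nonneg hCξ _) (mul_nonneg (mpow_nonneg hρ m) (hρ j)))
    _ = _ := by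
        rw [msize_add, msize_single, mpow_add, mpow_single, pow_one]
        ring

theorem le_lah_bound {σ Cξ : ℝ} {ρ : ℕ → ℝ} {T : (ℕ →₀ ℕ) → ℕ → ℝ}
    (hσ : 1 ≤ σ) (hCξ : 0 ≤ Cξ) (hρ : ∀ j, 0 ≤ ρ j)
    (hinit : ∀ m, T m 0 = if m = 0 then 1 else 0) (hvanish : ∀ l, T 0 (l + 1) = 0)
    (hrec : ∀ m j l, T (m + Finsupp.single j 1) (l + 1) ≤
      ∑ w ∈ Iic m, (mchoose m w : ℝ) * Cξ ^ (msize w + 1)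
        * (((msize w + 1).factorial : ℝ)) ^ σ * mpow ρ w * ρ j * T (m - w) l) (l : ℕ)
    (m : ℕ →₀ ℕ) : T m l ≤ Cξ ^ msize m * (lah (msize m) l : ℝ) ^ σ * mpow ρ m := by
  have hσ0 : σ ≠ 0 := by linarith
  induction l generalizing m with
  | zero =>
    rw [hinit]
    split_ifs with hm
    · simp [hm, msize, mpow]
    · obtain ⟨n, hn⟩ := Nat.exists_eq_succ_of_ne_zero (mt (Finsupp.degree_eq_zero_iff m).mp hm)
      simp [msize_eq_degree, hn, Real.zero_rpow hσ0]
  | succ l ih =>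
    rcases eq_or_ne m 0 with rfl | hm
    · simp [hvanish, msize, Real.zero_rpow hσ0]
    obtain ⟨j, hj⟩ := Finsupp.support_nonempty_iff.mpr hm
    have hjm : Finsupp.single j 1 ≤ m :=
      Finsupp.single_le_iff.mpr (Nat.one_le_iff_ne_zero.mpr (Finsupp.mem_support_iff.mp hj))
    rw [← tsub_add_cancel_of_le hjm]
    exact le_lah_bound_of_rec hσ hCξ hρ ih _ j (hrec _ j l)

theorem stmt17_general (σ Cξ : ℝ) (ρ : ℕ → ℝ) (T : (ℕ →₀ ℕ) → ℤ → ℝ)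
    (hσ : 1 ≤ σ) (hCξ : 1 ≤ Cξ) (hρ : ∀ j, 0 ≤ ρ j)
    (hinit : ∀ m : ℕ →₀ ℕ, T m 0 = if m = 0 then 1 else 0)
    (hvanish : ∀ (m : ℕ →₀ ℕ) (l : ℤ), ((msize m : ℤ) < l ∨ l < 0) → T m l = 0)
    (hrec : ∀ (m : ℕ →₀ ℕ) (j : ℕ) (l : ℤ), 1 ≤ l →
      T (m + Finsupp.single j 1) l ≤
        ∑ w ∈ Finset.Iic m, (mchoose m w : ℝ) * Cξ ^ (msize w + 1)
          * (((msize w + 1).factorial : ℝ)) ^ σ * mpow ρ w * ρ j * T (m - w) (l - 1)) :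
    ∀ m : ℕ →₀ ℕ, m ≠ 0 → ∀ l : ℕ, 1 ≤ l → l ≤ msize m →
      T m (l : ℤ) ≤ Cξ ^ msize m
        * ((((msize m).factorial : ℝ) * ((msize m - 1).factorial : ℝ))
            / ((l.factorial : ℝ) * ((msize m - l).factorial : ℝ) * ((l - 1).factorial : ℝ))) ^ σ
        * mpow ρ m := by
  intro m _ l hl hlm
  rw [← cast_lah hl hlm]
  refine le_lah_bound (T := fun m l => T m l) hσ (by linarith) hρ (by simpa using hinit)
    (fun l => hvanish 0 _ (.inl (by simp [msize]))) (fun m j l => ?_) l m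
  simpa using hrec m j (l + 1) (by omega)

theorem stmt17 (σ Cξ : ℝ) (ρ : ℕ → ℝ) (T : (ℕ →₀ ℕ) → ℤ → ℝ)
    (hσ : 1 ≤ σ) (hCξ : 1 ≤ Cξ) (hρ : ∀ j, 0 ≤ ρ j)
    (hTnonneg : ∀ m l, 0 ≤ T m l)
    (hinit : ∀ m : ℕ →₀ ℕ, T m 0 = if m = 0 then 1 else 0)
    (hvanish : ∀ (m : ℕ →₀ ℕ) (l : ℤ), ((msize m : ℤ) < l ∨ l < 0) → T m l = 0)
    (hrec : ∀ (m : ℕ →₀ ℕ) (j : ℕ) (l : ℤ), 1 ≤ l →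
      T (m + Finsupp.single j 1) l ≤
        ∑ w ∈ Finset.Iic m, (mchoose m w : ℝ) * Cξ ^ (msize w + 1)
          * (((msize w + 1).factorial : ℝ)) ^ σ * mpow ρ w * ρ j * T (m - w) (l - 1)) :
    ∀ m : ℕ →₀ ℕ, m ≠ 0 → ∀ l : ℕ, 1 ≤ l → l ≤ msize m →
      T m (l : ℤ) ≤ Cξ ^ msize m
        * ((((msize m).factorial : ℝ) * ((msize m - 1).factorial : ℝ))
            / ((l.factorial : ℝ) * ((msize m - l).factorial : ℝ) * ((l - 1).factorial : ℝ))) ^ σ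
        * mpow ρ m :=
  stmt17_general σ Cξ ρ T hσ hCξ hρ hinit hvanish hrec
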